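/- arXiv:2510.13180 — 2 statements merged into one kernel-verified Lean document; each statement's English description precedes it below -/
import Mathlib

section
/- Let A be an m×n real matrix, γ ≥ 1 a positive integer, and k a natural number with 2k < spark(A). Then for each y ∈ ℝ^m there exists at most one k-sparse vector z ∈ Σ_k ⊆ ℝ^n such that y = (1/√γ) A z; that is, if z, z' ∈ ℝ^n each have at most k nonzero entries and (1/√γ) A z = (1/√γ) A z', then z = z'. -/
noncomputable section
open Matrix ENNReal

/-- The matrix `A ⊗ ε_γᵀ` (each column of `A` repeated `γ` consecutive times,
scaled by `1/√γ`), with the column index set `Fin n × Fin γ` flattened to `Fin (n·γ)`. -/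
def kronEpsT {m n : ℕ} (A : Matrix (Fin m) (Fin n) ℝ) (γ : ℕ) :
    Matrix (Fin m) (Fin (n * γ)) ℝ :=
  Matrix.of fun i k =>
    A i ⟨(k : ℕ) / γ, by
      have hk := k.isLt
      rcases Nat.eq_zero_or_pos γ with h | h
      · subst h; exact absurd hk (by simp)
      · exact (Nat.div_lt_iff_lt_mul h).2 hk⟩ * (Real.sqrt (γ : ℝ))⁻¹

/-- The block-sum vector `x^γ ∈ ℝⁿ` of `x ∈ ℝ^{nγ}`:
`(x^γ)_j` is the sum of the `j`-th block of `γ` consecutive entries of `x`. -/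
def blockSum {n γ : ℕ} (x : Fin (n * γ) → ℝ) : Fin n → ℝ :=
  fun j => ∑ i : Fin γ, x (finProdFinEquiv (j, i))

/-- The block-average expansion `x̄ ∈ ℝ^{nγ}`: every entry in the `j`-th block of `γ`
consecutive entries is replaced by the block average `(x^γ)_j / γ`. -/
def blockAvg {n γ : ℕ} (x : Fin (n * γ) → ℝ) : Fin (n * γ) → ℝ :=
  fun k => blockSum x (finProdFinEquiv.symm k).1 / (γ : ℝ)

/-- The spark of `A`: the smallest number of columns of `A` that form a linearly
dependent set (`⊤` if all sets of columns are linearly independent).  Equivalently,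
the minimal size of the support of a nonzero vector in the kernel of `A`. -/
def spark {m n : ℕ} (A : Matrix (Fin m) (Fin n) ℝ) : ℕ∞ :=
  sInf {c : ℕ∞ | ∃ v : Fin n → ℝ, v ≠ 0 ∧ A.mulVec v = 0 ∧
    c = ((Function.support v).ncard : ℕ∞)}

/-- The mutual coherence `μ(A)`: the largest normalized absolute inner product
between two distinct columns of `A`. -/
def coherence {m n : ℕ} (A : Matrix (Fin m) (Fin n) ℝ) : ℝ :=
  sSup {r : ℝ | ∃ i j : Fin n, i ≠ j ∧
    r = |∑ t, A t i * A t j| /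
      (Real.sqrt (∑ t, A t i ^ 2) * Real.sqrt (∑ t, A t j ^ 2))}

/-- `A` satisfies the restricted isometry property of order `s` with constant `δ`. -/
def RIP {m n : ℕ} (A : Matrix (Fin m) (Fin n) ℝ) (s : ℕ) (δ : ℝ) : Prop :=
  ∀ v : Fin n → ℝ, (Function.support v).ncard ≤ s →
    (1 - δ) * (∑ j, v j ^ 2) ≤ (∑ i, (A.mulVec v) i ^ 2) ∧
    (∑ i, (A.mulVec v) i ^ 2) ≤ (1 + δ) * (∑ j, v j ^ 2)

theorem spark_le_ncard_support {m n : ℕ} (A : Matrix (Fin m) (Fin n) ℝ) {v : Fin n → ℝ}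
    (hv : v ≠ 0) (hAv : A *ᵥ v = 0) : spark A ≤ (Function.support v).ncard :=
  sInf_le ⟨v, hv, hAv, rfl⟩

theorem ncard_support_sub_le {ι R : Type*} [Finite ι] [AddGroup R] (z z' : ι → R) :
    (Function.support (z - z')).ncard ≤
      (Function.support z).ncard + (Function.support z').ncard :=
  (Set.ncard_le_ncard (Function.support_sub z z') (Set.toFinite _)).trans
    (Set.ncard_union_le _ _)

/-- Two `k`-sparse vectors with the same image differ by a `2k`-sparse kernel vector. -/
theorem eq_of_mulVec_eq_of_two_mul_lt_spark {m n k : ℕ} {A : Matrix (Fin m) (Fin n) ℝ}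
    (hk : ((2 * k : ℕ) : ℕ∞) < spark A) {z z' : Fin n → ℝ}
    (hz : (Function.support z).ncard ≤ k) (hz' : (Function.support z').ncard ≤ k)
    (hAzz' : A *ᵥ z = A *ᵥ z') : z = z' := by
  by_contra hne
  have hker : A *ᵥ (z - z') = 0 := by rw [Matrix.mulVec_sub, hAzz', sub_self]
  have hsparse : (Function.support (z - z')).ncard ≤ 2 * k := by
    linarith [ncard_support_sub_le z z']
  have := hk.trans_le (spark_le_ncard_support A (sub_ne_zero.2 hne) hker)
  exact absurd this (not_lt.2 (by exact_mod_cast hsparse))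

/-- If `2k < spark(A)` then for each `y` there is at most one `k`-sparse
`z` with `y = (1/√γ) A z`. -/
theorem spark_sparse_unique_scaled {m n γ k : ℕ} (hγ : 1 ≤ γ)
    (A : Matrix (Fin m) (Fin n) ℝ) (hk : ((2 * k : ℕ) : ℕ∞) < spark A) :
    (∀ y : Fin m → ℝ, Set.Subsingleton
        {z : Fin n → ℝ | (Function.support z).ncard ≤ k ∧
          (Real.sqrt (γ : ℝ))⁻¹ • A.mulVec z = y}) ∧
    ∀ z z' : Fin n → ℝ, (Function.support z).ncard ≤ k →
      (Function.support z').ncard ≤ k →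
      (Real.sqrt (γ : ℝ))⁻¹ • A.mulVec z = (Real.sqrt (γ : ℝ))⁻¹ • A.mulVec z' →
      z = z' := by
  have hscale : (Real.sqrt (γ : ℝ))⁻¹ ≠ 0 :=
    inv_ne_zero (Real.sqrt_pos.2 (by exact_mod_cast hγ)).ne'
  have unique : ∀ z z' : Fin n → ℝ, (Function.support z).ncard ≤ k →
      (Function.support z').ncard ≤ k →
      (Real.sqrt (γ : ℝ))⁻¹ • A.mulVec z = (Real.sqrt (γ : ℝ))⁻¹ • A.mulVec z' → z = z' :=
    fun z z' hz hz' heq =>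
      eq_of_mulVec_eq_of_two_mul_lt_spark hk hz hz' (smul_right_injective _ hscale heq)
  exact ⟨fun y z hz z' hz' => unique z z' hz.1 hz'.1 (hz.2.trans hz'.2.symm), unique⟩
end
end

section
/- Let A be an m×n real matrix satisfying the restricted isometry property of order 2k with constant δ_{2k} < √2 − 1, let γ ≥ 1, and let x ∈ ℝ^{nγ} be k-sparse with block-sum vector x^γ ∈ ℝ^n, and set y = (1/√γ) A x^γ. Then x^γ is the unique solution of the ℓ₁ minimization problem min { ‖z‖₁ : (1/√γ) A z = y }: for every z ∈ ℝ^n with (1/√γ) A z = y and z ≠ x^γ, one has ‖x^γ‖₁ < ‖z‖₁. -/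
noncomputable section
open Matrix ENNReal

/-!
Since `(√γ)⁻¹ ≠ 0`, every feasible `z` satisfies `A z = A x^γ`, and `x^γ` is `k`-sparse, so it
suffices that `A` has the null space property of order `k`: a nonzero `h ∈ ker A` carries
strictly less than half of its `ℓ¹` mass on any `k` indices `T`.

This is Candès' argument. Put `T` into a block `T₀` of at most `k` indices and cut the remaining
indices, in order of decreasing `|h i|`, into blocks `T₁, T₂, …` of size `k`. The RIP of order
`2k` gives `|⟪A u, A v⟫| ≤ δ ‖u‖₂ ‖v‖₂` for orthogonal `k`-sparse `u, v`; since
`A h_{T₀ ∪ T₁} = -∑_{j ≥ 2} A h_{T_j}`, this yields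
`(1 - δ) ‖h_{T₀ ∪ T₁}‖₂ ≤ √2 δ ∑_{j ≥ 2} ‖h_{T_j}‖₂ ≤ √2 δ ‖h_{T₀ᶜ}‖₁ / √k`, the last step because
every entry on `T_{j+1}` is at most the mean of `|h|` on `T_j`. With Cauchy–Schwarz on `T₀`,
`(1 - δ) ‖h_{T₀}‖₁ ≤ √2 δ ‖h_{T₀ᶜ}‖₁`, and `√2 δ < 1 - δ` is exactly `δ < √2 - 1`.
-/

open Finset Function

theorem add_le_sqrt_two_mul_sqrt_sq_add_sq (a b : ℝ) : a + b ≤ √2 * √(a ^ 2 + b ^ 2) := by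
  rw [← Real.sqrt_mul zero_le_two]
  apply Real.le_sqrt_of_sq_le
  nlinarith [sq_nonneg (a - b)]

theorem dotProduct_self_nonneg {ι : Type*} [Fintype ι] (v : ι → ℝ) : 0 ≤ v ⬝ᵥ v :=
  Finset.sum_nonneg fun i _ => mul_self_nonneg (v i)

section FinsetNorms

variable {ι : Type*} {k : ℕ} {f : ι → ℝ}

theorem sum_abs_le_sqrt_mul_sqrt_sum_sq {s : Finset ι} (hs : #s ≤ k) :
    ∑ i ∈ s, |f i| ≤ √k * √(∑ i ∈ s, f i ^ 2) := by
  rw [← Real.sqrt_mul (Nat.cast_nonneg k)]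
  apply Real.le_sqrt_of_sq_le
  calc (∑ i ∈ s, |f i|) ^ 2 ≤ #s * ∑ i ∈ s, |f i| ^ 2 := sq_sum_le_card_mul_sum_sq
    _ ≤ k * ∑ i ∈ s, f i ^ 2 := by
      simp only [sq_abs]
      gcongr

theorem sqrt_sum_sq_le_sum_abs_div_sqrt {s t : Finset ι} (hk : 0 < k) (ht : #t ≤ k)
    (hs : t.Nonempty → k ≤ #s) (hle : ∀ i ∈ t, ∀ i' ∈ s, |f i| ≤ |f i'|) :
    √(∑ i ∈ t, f i ^ 2) ≤ (∑ i ∈ s, |f i|) / √k := by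
  set L := ∑ i ∈ s, |f i|
  rcases t.eq_empty_or_nonempty with rfl | htne
  · simp only [sum_empty, Real.sqrt_zero]
    exact div_nonneg (sum_nonneg fun i _ => abs_nonneg (f i)) (Real.sqrt_nonneg k)
  have hk' : (0 : ℝ) < k := by exact_mod_cast hk
  have hbound (i : ι) (hi : i ∈ t) : |f i| ≤ L / k := by
    rw [le_div_iff₀ hk']
    calc |f i| * k ≤ |f i| * #s := by gcongr; exact_mod_cast hs htne
      _ ≤ L := by rw [mul_comm, ← nsmul_eq_mul]; exact card_nsmul_le_sum s _ _ (hle i hi)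
  refine Real.sqrt_le_iff.2 ⟨div_nonneg (sum_nonneg fun i _ => abs_nonneg (f i))
    (Real.sqrt_nonneg k), ?_⟩
  calc ∑ i ∈ t, f i ^ 2 = ∑ i ∈ t, |f i| ^ 2 := by simp only [sq_abs]
    _ ≤ ∑ _i ∈ t, (L / k) ^ 2 := by gcongr with i hi; exact hbound i hi
    _ = #t * (L / k) ^ 2 := by rw [sum_const, nsmul_eq_mul]
    _ ≤ k * (L / k) ^ 2 := by gcongr
    _ = (L / √k) ^ 2 := by rw [div_pow, div_pow, Real.sq_sqrt hk'.le]; field_simp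

end FinsetNorms

section Indicator

variable {ι : Type*} [Fintype ι]

theorem indicator_dotProduct_self (s : Finset ι) (f : ι → ℝ) :
    (s : Set ι).indicator f ⬝ᵥ (s : Set ι).indicator f = ∑ i ∈ s, f i ^ 2 := by
  rw [dotProduct, ← sum_indicator_subset _ (subset_univ s)]
  refine sum_congr rfl fun i _ => ?_
  by_cases hi : i ∈ s <;> simp [hi, sq]

theorem indicator_dotProduct_indicator_of_disjoint {s t : Finset ι} (hst : Disjoint s t)
    (f g : ι → ℝ) : (s : Set ι).indicator f ⬝ᵥ (t : Set ι).indicator g = 0 := by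
  refine sum_eq_zero fun i _ => ?_
  by_cases hi : i ∈ s
  · simp [Set.indicator_of_notMem (Finset.disjoint_left.1 hst hi)]
  · simp [hi]

theorem ncard_support_indicator_le (s : Finset ι) (f : ι → ℝ) :
    (support ((s : Set ι).indicator f)).ncard ≤ #s :=
  (Set.ncard_le_ncard Set.support_indicator_subset).trans (Set.ncard_coe_finset s).le

theorem sum_range_indicator_fiber (g : ι → ℕ) (f : ι → ℝ) {N : ℕ} (hN : ∀ i, g i < N) :
    ∑ j ∈ range N, (({i | g i = j} : Finset ι) : Set ι).indicator f = f := by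
  ext i
  simp [Finset.sum_apply, Set.indicator_apply, hN i]

end Indicator

/-- Block `0` is only bounded in size; it is where a prescribed index set is put. -/
structure IsDecreasingBlocks {ι : Type*} [Fintype ι] (h : ι → ℝ) (k : ℕ) (blk : ι → ℕ) :
    Prop where
  card_le : ∀ j, #{i | blk i = j} ≤ k
  le_card : ∀ i j, j < blk i → k ≤ #{i' | blk i' = j}
  abs_le : ∀ i i', 0 < blk i' → blk i' < blk i → |h i| ≤ |h i'|

section RankBlocks

variable {n k : ℕ} (σ : Equiv.Perm (Fin n))

theorem card_filter_rank_div_eq_le (hk : 0 < k) (j : ℕ) :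
    #{i | (σ.symm i : ℕ) / k = j} ≤ k :=
  calc #{i | (σ.symm i : ℕ) / k = j} ≤ #(Ico (j * k) (j * k + k)) := by
        refine card_le_card_of_injOn (fun i => (σ.symm i : ℕ)) (fun i hi => ?_)
          (fun i _ i' _ h => σ.symm.injective (Fin.ext h))
        have := (Nat.div_eq_iff hk).1 (mem_filter.1 hi).2
        simp only [coe_Ico, Set.mem_Ico]
        omega
    _ = k := by simp

theorem le_card_filter_rank_div_eq (hk : 0 < k) {i : Fin n} {j : ℕ}
    (hj : j < (σ.symm i : ℕ) / k) : k ≤ #{i' | (σ.symm i' : ℕ) / k = j} := by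
  have hn : j * k + k ≤ n := by
    have h₁ : (j + 1) * k ≤ σ.symm i := (Nat.le_div_iff_mul_le hk).1 hj
    have h₂ := (σ.symm i).isLt
    rw [add_one_mul] at h₁
    omega
  calc k = #(Ico (j * k) (j * k + k)) := by simp
    _ ≤ #(({i' | (σ.symm i' : ℕ) / k = j} : Finset (Fin n)).image
          fun i' => (σ.symm i' : ℕ)) := by
      refine card_le_card fun p hp => mem_image.2 ⟨σ ⟨p, by simp at hp; omega⟩, ?_, by simp⟩
      simp only [mem_Ico] at hp
      simp only [mem_filter, mem_univ, true_and, Equiv.symm_apply_apply]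
      exact (Nat.div_eq_iff hk).2 (by omega)
    _ ≤ #{i' | (σ.symm i' : ℕ) / k = j} := card_image_le

theorem exists_decreasing_blocks (hk : 0 < k) (h : Fin n → ℝ) {T : Finset (Fin n)}
    (hT : #T ≤ k) :
    ∃ blk : Fin n → ℕ, (∀ i, blk i < n) ∧ (∀ i ∈ T, blk i = 0) ∧ IsDecreasingBlocks h k blk := by
  -- sort with the indices of `T` first, then by decreasing `|h i|`
  let key : Fin n → Lex (Bool × ℝ) := fun i => toLex (decide (i ∉ T), -|h i|)
  let σ := Tuple.sort key
  let blk : Fin n → ℕ := fun i => (σ.symm i : ℕ) / k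
  have hkey {i i'} (hii' : blk i' < blk i) : key i' ≤ key i := by
    have hlt : σ.symm i' ≤ σ.symm i := Fin.mk_le_mk.2 <| le_of_lt <|
      lt_of_not_ge fun hle => hii'.not_ge (Nat.div_le_div_right hle)
    have hmono : key (σ (σ.symm i')) ≤ key (σ (σ.symm i)) := Tuple.monotone_sort key hlt
    simpa only [Equiv.apply_symm_apply] using hmono
  have hT0 (i : Fin n) (hi : i ∈ T) : blk i = 0 := by
    by_contra hne
    have hsub : ({i' | blk i' = 0} : Finset (Fin n)) ⊂ T := by
      refine (ssubset_iff_of_subset fun i' hi' => ?_).2 ⟨i, hi, by simpa using hne⟩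
      have := (Prod.Lex.toLex_le_toLex'.1 (hkey (i := i) (i' := i')
        (by rw [(mem_filter.1 hi').2]; omega))).1
      simpa [hi, Bool.le_iff_imp] using this
    have : k ≤ #{i' | blk i' = 0} := le_card_filter_rank_div_eq σ hk (Nat.pos_of_ne_zero hne)
    have := card_lt_card hsub
    omega
  refine ⟨blk, fun i => (Nat.div_le_self _ _).trans_lt (σ.symm i).isLt, hT0,
    ⟨card_filter_rank_div_eq_le σ hk, fun i j hj => le_card_filter_rank_div_eq σ hk hj,
      fun i i' hi' hii' => ?_⟩⟩
  have hi'T : i' ∉ T := fun hmem => hi'.ne' (hT0 i' hmem)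
  obtain ⟨hfst, hsnd⟩ := Prod.Lex.toLex_le_toLex'.1 (hkey hii')
  have hiT : i ∉ T := by simpa [hi'T, Bool.le_iff_imp] using hfst
  exact neg_le_neg_iff.1 (hsnd (by simp [hi'T, hiT]))

end RankBlocks

section Blocks

variable {ι : Type*} [Fintype ι] {k : ℕ} {blk : ι → ℕ} {h : ι → ℝ}

theorem IsDecreasingBlocks.sum_sqrt_sum_sq_le (hblk : IsDecreasingBlocks h k blk) (hk : 0 < k)
    (N : ℕ) :
    ∑ j ∈ range N, √(∑ i with blk i = j + 2, h i ^ 2) ≤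
      (∑ j ∈ range N, ∑ i with blk i = j + 1, |h i|) / √k := by
  rw [sum_div]
  refine sum_le_sum fun j _ => sqrt_sum_sq_le_sum_abs_div_sqrt hk (hblk.card_le _) ?_ ?_
  · rintro ⟨i, hi⟩
    exact hblk.le_card i _ (by rw [(mem_filter.1 hi).2]; omega)
  · intro i hi i' hi'
    rw [mem_filter] at hi hi'
    exact hblk.abs_le i i' (by omega) (by omega)

theorem sum_fiber_zero_add_sum_range_sum_fiber_succ {M : Type*} [AddCommMonoid M] (f : ι → M)
    {N : ℕ} (hN : ∀ i, blk i < N + 1) :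
    ∑ i with blk i = 0, f i + ∑ j ∈ range N, ∑ i with blk i = j + 1, f i = ∑ i, f i := by
  rw [add_comm, ← sum_range_succ' (fun j => ∑ i with blk i = j, f i)]
  exact sum_fiberwise_of_maps_to (fun i _ => mem_range.2 (hN i)) _

end Blocks

def NullSpaceProperty {m n : ℕ} (A : Matrix (Fin m) (Fin n) ℝ) (k : ℕ) : Prop :=
  ∀ h : Fin n → ℝ, A *ᵥ h = 0 → h ≠ 0 → ∀ T : Finset (Fin n), #T ≤ k →
    ∑ i ∈ T, |h i| < ∑ i ∈ Tᶜ, |h i|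

theorem NullSpaceProperty.sum_abs_lt {m n k : ℕ} {A : Matrix (Fin m) (Fin n) ℝ}
    (hA : NullSpaceProperty A k) {x z : Fin n → ℝ} (hx : (support x).ncard ≤ k)
    (hzx : A *ᵥ z = A *ᵥ x) (hne : z ≠ x) : ∑ i, |x i| < ∑ i, |z i| := by
  set T : Finset (Fin n) := {i | x i ≠ 0}
  have hT : #T ≤ k := by
    rw [← Set.ncard_coe_finset]
    convert hx
    ext i
    simp [T]
  have hnsp := hA (z - x) (by rw [mulVec_sub, hzx, sub_self]) (sub_ne_zero.2 hne) T hT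
  have hxT : ∑ i, |x i| = ∑ i ∈ T, |x i| :=
    (sum_subset (subset_univ T) fun i _ hi => by simp_all [T]).symm
  have hzT : ∑ i ∈ T, (|x i| - |(z - x) i|) ≤ ∑ i ∈ T, |z i| :=
    sum_le_sum fun i _ => by
      have := abs_sub_abs_le_abs_sub (x i) (z i)
      rw [abs_sub_comm] at this
      simp only [Pi.sub_apply]; linarith
  have hzTc : ∑ i ∈ Tᶜ, |(z - x) i| = ∑ i ∈ Tᶜ, |z i| :=
    sum_congr rfl fun i hi => by simp_all [T]
  rw [sum_sub_distrib] at hzT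
  linarith [sum_add_sum_compl T fun i => |z i|]

namespace RIP

variable {m n s k : ℕ} {A : Matrix (Fin m) (Fin n) ℝ} {δ : ℝ}

theorem dotProduct_bounds (hA : RIP A s δ) {v : Fin n → ℝ} (hv : (support v).ncard ≤ s) :
    (1 - δ) * (v ⬝ᵥ v) ≤ A *ᵥ v ⬝ᵥ A *ᵥ v ∧ A *ᵥ v ⬝ᵥ A *ᵥ v ≤ (1 + δ) * (v ⬝ᵥ v) := by
  simpa only [dotProduct, sq] using hA v hv

theorem nonneg (hA : RIP A s δ) (hs : 0 < s) (i : Fin n) : 0 ≤ δ := by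
  have hsupp : (support (Pi.single i (1 : ℝ))).ncard ≤ s := by
    rw [Pi.support_single_of_ne one_ne_zero, Set.ncard_singleton]; exact hs
  have hone : Pi.single i (1 : ℝ) ⬝ᵥ Pi.single i 1 = 1 := by simp
  have := hA.dotProduct_bounds hsupp
  rw [hone] at this
  linarith [this.1.trans this.2]

/-- Polarization: apply the RIP to `‖v‖ u ± ‖u‖ v`, which have the same norm. -/
theorem abs_dotProduct_mulVec_le (hA : RIP A s δ) {u v : Fin n → ℝ}
    (hs : (support u).ncard + (support v).ncard ≤ s) (huv : u ⬝ᵥ v = 0) :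
    |A *ᵥ u ⬝ᵥ A *ᵥ v| ≤ δ * (√(u ⬝ᵥ u) * √(v ⬝ᵥ v)) := by
  rcases eq_or_ne u 0 with rfl | hu
  · simp
  rcases eq_or_ne v 0 with rfl | hv
  · simp
  set a := √(u ⬝ᵥ u)
  set b := √(v ⬝ᵥ v)
  have ha : 0 < a := Real.sqrt_pos.2 <|
    (dotProduct_self_nonneg u).lt_of_ne' (dotProduct_self_eq_zero.not.2 hu)
  have hb : 0 < b := Real.sqrt_pos.2 <|
    (dotProduct_self_nonneg v).lt_of_ne' (dotProduct_self_eq_zero.not.2 hv)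
  have ha2 : a ^ 2 = u ⬝ᵥ u := Real.sq_sqrt (dotProduct_self_nonneg u)
  have hb2 : b ^ 2 = v ⬝ᵥ v := Real.sq_sqrt (dotProduct_self_nonneg v)
  have hcomb (c d : ℝ) := hA.dotProduct_bounds (v := c • u + d • v) <|
    calc (support (c • u + d • v)).ncard ≤ (support u ∪ support v).ncard :=
          Set.ncard_le_ncard ((support_add _ _).trans (Set.union_subset_union
            (support_const_smul_subset c u) (support_const_smul_subset d v)))
      _ ≤ s := (Set.ncard_union_le _ _).trans hs
  simp only [mulVec_add, mulVec_smul, add_dotProduct, dotProduct_add, smul_dotProduct,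
    dotProduct_smul, smul_eq_mul, dotProduct_comm v u, huv,
    dotProduct_comm (A *ᵥ v) (A *ᵥ u)] at hcomb
  obtain ⟨hp₁, hp₂⟩ := hcomb b a
  obtain ⟨hm₁, hm₂⟩ := hcomb b (-a)
  rw [← ha2, ← hb2] at hp₁ hp₂ hm₁ hm₂
  have hab : 0 < 4 * (a * b) := by positivity
  rw [abs_le]
  constructor <;> refine le_of_mul_le_mul_left ?_ hab <;> nlinarith

theorem one_sub_mul_dotProduct_self_le (hA : RIP A (2 * k) δ) {u v : Fin n → ℝ}
    {w : ℕ → Fin n → ℝ} {J : Finset ℕ} (hu : (support u).ncard ≤ k)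
    (hv : (support v).ncard ≤ k) (hw : ∀ j ∈ J, (support (w j)).ncard ≤ k)
    (huw : ∀ j ∈ J, u ⬝ᵥ w j = 0) (hvw : ∀ j ∈ J, v ⬝ᵥ w j = 0)
    (hker : A *ᵥ (u + v + ∑ j ∈ J, w j) = 0) :
    (1 - δ) * ((u + v) ⬝ᵥ (u + v)) ≤
      δ * (√(u ⬝ᵥ u) + √(v ⬝ᵥ v)) * ∑ j ∈ J, √(w j ⬝ᵥ w j) := by
  have huv : (support (u + v)).ncard ≤ 2 * k :=
    calc (support (u + v)).ncard ≤ (support u ∪ support v).ncard :=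
          Set.ncard_le_ncard (support_add _ _)
      _ ≤ 2 * k := (Set.ncard_union_le _ _).trans (by omega)
  have hhead : A *ᵥ (u + v) = -∑ j ∈ J, A *ᵥ w j := by
    rw [mulVec_add, mulVec_sum] at hker
    exact eq_neg_of_add_eq_zero_left hker
  have hcross {x : Fin n → ℝ} (hx : (support x).ncard ≤ k) {j : ℕ} (hj : j ∈ J)
      (hxw : x ⬝ᵥ w j = 0) :
      -(A *ᵥ x ⬝ᵥ A *ᵥ w j) ≤ δ * (√(x ⬝ᵥ x) * √(w j ⬝ᵥ w j)) :=
    (neg_le_abs _).trans (hA.abs_dotProduct_mulVec_le (by linarith [hw j hj]) hxw)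
  calc (1 - δ) * ((u + v) ⬝ᵥ (u + v))
      ≤ A *ᵥ (u + v) ⬝ᵥ A *ᵥ (u + v) := (hA.dotProduct_bounds huv).1
    _ = A *ᵥ (u + v) ⬝ᵥ -∑ j ∈ J, A *ᵥ w j := by rw [← hhead]
    _ = ∑ j ∈ J, (-(A *ᵥ u ⬝ᵥ A *ᵥ w j) + -(A *ᵥ v ⬝ᵥ A *ᵥ w j)) := by
      simp only [dotProduct_neg, dotProduct_sum, mulVec_add, add_dotProduct, sum_add_distrib,
        sum_neg_distrib, neg_add]
    _ ≤ ∑ j ∈ J, (δ * (√(u ⬝ᵥ u) * √(w j ⬝ᵥ w j)) + δ * (√(v ⬝ᵥ v) * √(w j ⬝ᵥ w j))) :=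
      sum_le_sum fun j hj => add_le_add (hcross hu hj (huw j hj)) (hcross hv hj (hvw j hj))
    _ = δ * (√(u ⬝ᵥ u) + √(v ⬝ᵥ v)) * ∑ j ∈ J, √(w j ⬝ᵥ w j) := by
      rw [mul_sum]; exact sum_congr rfl fun j _ => by ring

theorem one_sub_mul_sqrt_dotProduct_self_le (hA : RIP A (2 * k) δ) (hδ : 0 ≤ δ)
    {u v : Fin n → ℝ} {w : ℕ → Fin n → ℝ} {J : Finset ℕ} (hu : (support u).ncard ≤ k)
    (hv : (support v).ncard ≤ k) (hw : ∀ j ∈ J, (support (w j)).ncard ≤ k) (huv : u ⬝ᵥ v = 0)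
    (huw : ∀ j ∈ J, u ⬝ᵥ w j = 0) (hvw : ∀ j ∈ J, v ⬝ᵥ w j = 0)
    (hker : A *ᵥ (u + v + ∑ j ∈ J, w j) = 0) :
    (1 - δ) * √((u + v) ⬝ᵥ (u + v)) ≤ √2 * δ * ∑ j ∈ J, √(w j ⬝ᵥ w j) := by
  set E := √((u + v) ⬝ᵥ (u + v))
  set S := ∑ j ∈ J, √(w j ⬝ᵥ w j)
  have hS : 0 ≤ S := sum_nonneg fun j _ => Real.sqrt_nonneg _
  have hpyth : (u + v) ⬝ᵥ (u + v) = √(u ⬝ᵥ u) ^ 2 + √(v ⬝ᵥ v) ^ 2 := by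
    rw [Real.sq_sqrt (dotProduct_self_nonneg u), Real.sq_sqrt (dotProduct_self_nonneg v),
      add_dotProduct, dotProduct_add, dotProduct_add, dotProduct_comm v u, huv]
    ring
  have hsplit := add_le_sqrt_two_mul_sqrt_sq_add_sq √(u ⬝ᵥ u) √(v ⬝ᵥ v)
  rw [← hpyth] at hsplit
  have hE2 : (1 - δ) * E * E ≤ √2 * δ * S * E :=
    calc (1 - δ) * E * E = (1 - δ) * ((u + v) ⬝ᵥ (u + v)) := by
          rw [mul_assoc, Real.mul_self_sqrt (dotProduct_self_nonneg _)]
      _ ≤ δ * (√(u ⬝ᵥ u) + √(v ⬝ᵥ v)) * S :=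
          hA.one_sub_mul_dotProduct_self_le hu hv hw huw hvw hker
      _ ≤ δ * (√2 * E) * S := by gcongr
      _ = √2 * δ * S * E := by ring
  rcases (show 0 ≤ E from Real.sqrt_nonneg _).eq_or_lt with hE | hE
  · rw [← hE, mul_zero]; positivity
  · exact le_of_mul_le_mul_right hE2 hE

theorem one_sub_mul_sum_abs_fiber_zero_le (hA : RIP A (2 * k) δ) (hδ : 0 ≤ δ) (hδ1 : δ ≤ 1)
    (hk : 0 < k) {h : Fin n → ℝ} (hker : A *ᵥ h = 0) {blk : Fin n → ℕ}
    (hblk : IsDecreasingBlocks h k blk) {N : ℕ} (hN : ∀ i, blk i < N + 2) :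
    (1 - δ) * ∑ i with blk i = 0, |h i| ≤
      √2 * δ * ∑ j ∈ range (N + 1), ∑ i with blk i = j + 1, |h i| := by
  set P : ℕ → Fin n → ℝ := fun j => (({i | blk i = j} : Finset (Fin n)) : Set (Fin n)).indicator h
  have hP (j : ℕ) : P j ⬝ᵥ P j = ∑ i with blk i = j, h i ^ 2 := indicator_dotProduct_self _ _
  have horth {j j'} (hne : j ≠ j') : P j ⬝ᵥ P j' = 0 :=
    indicator_dotProduct_indicator_of_disjoint
      (disjoint_filter.2 fun _ _ h₁ h₂ => hne (h₁.symm.trans h₂)) _ _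
  have hsupp (j : ℕ) : (support (P j)).ncard ≤ k :=
    (ncard_support_indicator_le _ _).trans (hblk.card_le j)
  have hsum : P 0 + P 1 + ∑ j ∈ range N, P (j + 2) = h := by
    rw [← sum_range_indicator_fiber blk h hN, sum_range_succ', sum_range_succ']
    abel
  have hhead := hA.one_sub_mul_sqrt_dotProduct_self_le hδ (hsupp 0) (hsupp 1)
    (fun j _ => hsupp _) (horth zero_ne_one) (fun j _ => horth (by omega))
    (fun j _ => horth (by omega)) (hsum ▸ hker)
  have htail := hblk.sum_sqrt_sum_sq_le hk N
  set E := √((P 0 + P 1) ⬝ᵥ (P 0 + P 1))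
  set L := ∑ j ∈ range (N + 1), ∑ i with blk i = j + 1, |h i|
  have hL : ∑ j ∈ range N, ∑ i with blk i = j + 1, |h i| ≤ L :=
    sum_le_sum_of_subset_of_nonneg (range_mono N.le_succ) fun _ _ _ =>
      sum_nonneg fun _ _ => abs_nonneg _
  have hE : ∑ i with blk i = 0, |h i| ≤ √k * E := by
    refine (sum_abs_le_sqrt_mul_sqrt_sum_sq (hblk.card_le 0)).trans
      (mul_le_mul_of_nonneg_left (Real.sqrt_le_sqrt ?_) (Real.sqrt_nonneg k))
    rw [← hP, add_dotProduct, dotProduct_add, dotProduct_add, horth zero_ne_one,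
      horth one_ne_zero]
    linarith [dotProduct_self_nonneg (P 1)]
  calc (1 - δ) * ∑ i with blk i = 0, |h i| ≤ (1 - δ) * (√k * E) := by gcongr
    _ = √k * ((1 - δ) * E) := by ring
    _ ≤ √k * (√2 * δ * (L / √k)) := by
      refine mul_le_mul_of_nonneg_left (hhead.trans ?_) (Real.sqrt_nonneg k)
      refine mul_le_mul_of_nonneg_left ?_ (by positivity)
      simpa only [hP] using htail.trans (div_le_div_of_nonneg_right hL (Real.sqrt_nonneg k))
    _ = √2 * δ * L := by
      have : √(k : ℝ) ≠ 0 := (Real.sqrt_pos.2 (Nat.cast_pos.2 hk)).ne'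
      field_simp

theorem nullSpaceProperty (hA : RIP A (2 * k) δ) (hδ : δ < √2 - 1) : NullSpaceProperty A k := by
  intro h hker hh T hT
  obtain ⟨i₀, hi₀⟩ := Function.ne_iff.1 hh
  have hpos : 0 < ∑ i, |h i| := sum_pos' (fun i _ => abs_nonneg _) ⟨i₀, mem_univ _, abs_pos.2 hi₀⟩
  rcases k.eq_zero_or_pos with rfl | hk
  · rw [card_eq_zero.1 (Nat.le_zero.1 hT)]
    simpa using hpos
  have hsqrt2 : √2 ^ 2 = 2 := Real.sq_sqrt zero_le_two
  have hδ0 : 0 ≤ δ := hA.nonneg (by omega) i₀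
  have hδ1 : δ ≤ 1 := by nlinarith [Real.sqrt_nonneg 2]
  -- `δ < √2 - 1` is exactly `√2 δ < 1 - δ`
  have hρ : √2 * δ < 1 - δ := by
    nlinarith [mul_lt_mul_of_pos_left hδ (by positivity : 0 < √2 + 1)]
  obtain ⟨blk, hN, hT0, hblk⟩ := exists_decreasing_blocks hk h hT
  have hhead := hA.one_sub_mul_sum_abs_fiber_zero_le hδ0 hδ1 hk hker hblk (N := n)
    fun i => (hN i).trans (by omega)
  have htotal := sum_fiber_zero_add_sum_range_sum_fiber_succ (fun i => |h i|) (N := n + 1)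
    fun i => (hN i).trans (by omega)
  have hT_le : ∑ i ∈ T, |h i| ≤ ∑ i with blk i = 0, |h i| :=
    sum_le_sum_of_subset_of_nonneg (fun i hi => mem_filter.2 ⟨mem_univ i, hT0 i hi⟩)
      fun _ _ _ => abs_nonneg _
  have hsplit := sum_add_sum_compl T fun i => |h i|
  set H := ∑ i with blk i = 0, |h i|
  set L := ∑ j ∈ range (n + 1), ∑ i with blk i = j + 1, |h i|
  have hH : 0 ≤ H := sum_nonneg fun _ _ => abs_nonneg _
  have hL : 0 < L := by
    by_contra! hL
    nlinarith [mul_nonneg (mul_nonneg (Real.sqrt_nonneg 2) hδ0) (neg_nonneg.2 hL)]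
  have hHL : H < L := lt_of_mul_lt_mul_left (hhead.trans_lt (by gcongr)) (by linarith)
  linarith

end RIP

theorem ncard_support_blockSum_le {n γ : ℕ} (x : Fin (n * γ) → ℝ) :
    (support (blockSum x)).ncard ≤ (support x).ncard := by
  refine (Set.ncard_le_ncard fun j hj => ?_).trans
    (Set.ncard_image_le (f := fun i => (finProdFinEquiv.symm i).1) (Set.toFinite _))
  obtain ⟨i, -, hi⟩ := exists_ne_zero_of_sum_ne_zero hj
  exact ⟨finProdFinEquiv (j, i), hi, by simp⟩

theorem rip_dkstp_l1_unique_minimizer_general {m n γ k : ℕ} (hγ : 1 ≤ γ)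
    (A : Matrix (Fin m) (Fin n) ℝ) (δ : ℝ)
    (hδ : δ < Real.sqrt 2 - 1) (hRIP : RIP A (2 * k) δ)
    (x : Fin (n * γ) → ℝ) (hx : (Function.support x).ncard ≤ k)
    (y : Fin m → ℝ) (hy : y = (Real.sqrt (γ : ℝ))⁻¹ • A.mulVec (blockSum x)) :
    ∀ z : Fin n → ℝ, (Real.sqrt (γ : ℝ))⁻¹ • A.mulVec z = y → z ≠ blockSum x →
      (∑ j, |blockSum x j|) < ∑ j, |z j| := by
  intro z hz hne
  have hγ' : (√(γ : ℝ))⁻¹ ≠ 0 := inv_ne_zero (Real.sqrt_pos.2 (by exact_mod_cast hγ)).ne'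
  exact (hRIP.nullSpaceProperty hδ).sum_abs_lt ((ncard_support_blockSum_le x).trans hx)
    (smul_right_injective _ hγ' (hz.trans hy)) hne

/-- If `A` satisfies the RIP of order `2k` with `δ_{2k} < √2 − 1`,
`x ∈ ℝ^{nγ}` is `k`-sparse and `y = (1/√γ) A x^γ`, then `x^γ` is the unique `ℓ₁`
minimizer among all solutions of `(1/√γ) A z = y`. -/
theorem rip_dkstp_l1_unique_minimizer {m n γ k : ℕ} (hγ : 1 ≤ γ)
    (A : Matrix (Fin m) (Fin n) ℝ) (δ : ℝ)
    (hδ0 : 0 < δ) (hδ1 : δ < 1) (hδ : δ < Real.sqrt 2 - 1) (hRIP : RIP A (2 * k) δ)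
    (x : Fin (n * γ) → ℝ) (hx : (Function.support x).ncard ≤ k)
    (y : Fin m → ℝ) (hy : y = (Real.sqrt (γ : ℝ))⁻¹ • A.mulVec (blockSum x)) :
    ∀ z : Fin n → ℝ, (Real.sqrt (γ : ℝ))⁻¹ • A.mulVec z = y → z ≠ blockSum x →
      (∑ j, |blockSum x j|) < ∑ j, |z j| :=
  rip_dkstp_l1_unique_minimizer_general hγ A δ hδ hRIP x hx y hy
end
end
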